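/- arXiv:1311.2881 — 3 statements merged into one kernel-verified Lean document; each statement's English description precedes it below -/
import Mathlib

section
/- If V and W are 2-dimensional simple K G-modules and there exist scalars c, d ∈ K such that g²·x = c·x and z·x = d·x for all x ∈ V and all x ∈ W, then V and W are isomorphic as K G-modules. -/
/-!
From `g ε g⁻¹ = ε²` and `ε³ = 1` we get `ε g = g ε²`, so `g` maps the `μ`-eigenspace of `ε` into
the `μ²`-eigenspace. In particular the fixed space of `ε` is a submodule of the simple module `V`;
it cannot be all of `V`, since then `ε` and `z` act by scalars and an eigenline of `g` is a
submodule, so the eigenvalues of `ε` are primitive cube roots of unity, and both of them occur.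
For an eigenvector `v` of `ε` with eigenvalue `μ`, the basis `v, g v` represents `g`, `ε`, `z` by
`[[0, c], [1, 0]]`, `diag(μ, μ²)`, `d`, which depend only on `μ`, `c`, `d`; matching such bases of
`V` and `W` gives the isomorphism.
-/

open MonoidAlgebra Module

section GroupAction

variable {K G V W : Type*} [CommSemiring K] [Group G]

section

variable [AddCommMonoid V] [Module K[G] V]

theorem of_inv_smul_of_smul (a : G) (x : V) : of K G a⁻¹ • of K G a • x = x := by
  rw [← mul_smul, ← map_mul, inv_mul_cancel, map_one, one_smul]

theorem of_smul_of_inv_smul (a : G) (x : V) : of K G a • of K G a⁻¹ • x = x := by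
  simpa using of_inv_smul_of_smul (K := K) a⁻¹ x

theorem of_smul_ne_zero (a : G) {x : V} (hx : x ≠ 0) : of K G a • x ≠ 0 := fun h => hx <| by
  simpa only [of_inv_smul_of_smul, smul_zero] using congrArg (of K G a⁻¹ • ·) h

end

variable [AddCommMonoid V] [Module K V] [Module K[G] V] [AddCommMonoid W] [Module K W]
  [Module K[G] W]

variable (K V) in
noncomputable abbrev groupEnd [IsScalarTower K K[G] V] (a : G) : End K V :=
  Representation.ofModule' V a

@[simp]
theorem groupEnd_apply [IsScalarTower K K[G] V] (a : G) (x : V) :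
    groupEnd K V a x = of K G a • x :=
  rfl

theorem map_of_smul_of_closure_eq_top {S : Set G} (hS : Subgroup.closure S = ⊤)
    (f : V →ₗ[K] W) (hf : ∀ s ∈ S, ∀ x, f (of K G s • x) = of K G s • f x) (σ : G) (x : V) :
    f (of K G σ • x) = of K G σ • f x := by
  induction (hS ▸ Subgroup.mem_top σ : σ ∈ Subgroup.closure S)
    using Subgroup.closure_induction generalizing x with
  | mem s hs => exact hf s hs x
  | one => rw [map_one, one_smul, one_smul]
  | mul a b _ _ ha hb => rw [map_mul, mul_smul, mul_smul, ha, hb]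
  | inv a _ ha =>
    have := congrArg (of K G a⁻¹ • ·) (ha (of K G a⁻¹ • x))
    simp only [of_smul_of_inv_smul, of_inv_smul_of_smul] at this
    exact this.symm

theorem map_of_smul_of_basis [IsScalarTower K K[G] V] [IsScalarTower K K[G] W] {ι : Type*}
    (b : Basis ι K V) (f : V →ₗ[K] W) (s : G)
    (hb : ∀ i, f (of K G s • b i) = of K G s • f (b i)) (x : V) :
    f (of K G s • x) = of K G s • f x :=
  LinearMap.congr_fun (b.ext (f₁ := f ∘ₗ groupEnd K V s) (f₂ := groupEnd K W s ∘ₗ f) hb) x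

end GroupAction

section FiniteDimensional

variable {K G V : Type*} [Field K] [Group G] [AddCommGroup V] [Module K V] [Module K[G] V]
  [IsScalarTower K K[G] V] [FiniteDimensional K V]

theorem of_inv_smul_mem {U : Submodule K V} {a : G} (ha : ∀ x ∈ U, of K G a • x ∈ U) {x : V}
    (hx : x ∈ U) : of K G a⁻¹ • x ∈ U := by
  have hinj : Function.Injective (groupEnd K V a) := fun x y h => by
    simpa only [groupEnd_apply, of_inv_smul_of_smul] using congrArg (of K G a⁻¹ • ·) h
  have hmap : U.map (groupEnd K V a) = U :=
    Submodule.eq_of_le_of_finrank_eq (Submodule.map_le_iff_le_comap.2 ha)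
      (Submodule.equivMapOfInjective _ hinj U).finrank_eq.symm
  rw [← hmap] at hx
  obtain ⟨y, hy, rfl⟩ := hx
  rwa [groupEnd_apply, of_inv_smul_of_smul]

theorem of_smul_mem_of_closure_eq_top {S : Set G} (hS : Subgroup.closure S = ⊤)
    {U : Submodule K V} (hU : ∀ s ∈ S, ∀ x ∈ U, of K G s • x ∈ U) (σ : G) :
    ∀ x ∈ U, of K G σ • x ∈ U := by
  induction (hS ▸ Subgroup.mem_top σ : σ ∈ Subgroup.closure S)
    using Subgroup.closure_induction with
  | mem s hs => exact hU s hs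
  | one => exact fun x hx => by rwa [map_one, one_smul]
  | mul a b _ _ ha hb => exact fun x hx => by rw [map_mul, mul_smul]; exact ha _ (hb x hx)
  | inv a _ ha => exact fun x hx => of_inv_smul_mem ha hx

theorem eq_bot_or_eq_top_of_closure_eq_top [IsSimpleModule K[G] V] {S : Set G}
    (hS : Subgroup.closure S = ⊤) {U : Submodule K V}
    (hU : ∀ s ∈ S, ∀ x ∈ U, of K G s • x ∈ U) : U = ⊥ ∨ U = ⊤ := by
  have hN := eq_bot_or_eq_top (submoduleOfSMulMem U (of_smul_mem_of_closure_eq_top hS hU))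
  rwa [← Submodule.restrictScalars_eq_bot_iff K, ← Submodule.restrictScalars_eq_top_iff K] at hN

end FiniteDimensional

theorem mul_eq_mul_sq_of_conj_eq_sq {G : Type*} [Group G] {g ε : G}
    (hconj : g * ε * g⁻¹ = ε ^ 2) (hε : ε ^ 3 = 1) : ε * g = g * ε ^ 2 := by
  have h : ε = g * ε ^ 2 * g⁻¹ := by
    calc ε = (ε ^ 2) ^ 2 := by rw [← pow_mul, pow_succ' ε 3, hε, mul_one]
      _ = (g * ε * g⁻¹) ^ 2 := by rw [hconj]
      _ = g * ε ^ 2 * g⁻¹ := conj_pow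
  conv_lhs => rw [h]
  group

theorem sq_add_self_add_one_eq_zero {K : Type*} [Field K] {μ : K} (h3 : μ ^ 3 = 1)
    (h1 : μ ≠ 1) : μ ^ 2 + μ + 1 = 0 := by
  have h : (μ - 1) * (μ ^ 2 + μ + 1) = 0 := by linear_combination h3
  exact (mul_eq_zero.1 h).resolve_left (sub_ne_zero.2 h1)

theorem eq_or_eq_sq_of_pow_three_eq_one {K : Type*} [Field K] {μ ν : K} (hμ3 : μ ^ 3 = 1)
    (hμ1 : μ ≠ 1) (hν3 : ν ^ 3 = 1) (hν1 : ν ≠ 1) : ν = μ ∨ ν = μ ^ 2 := by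
  have hμ := sq_add_self_add_one_eq_zero hμ3 hμ1
  have hν := sq_add_self_add_one_eq_zero hν3 hν1
  have h : (ν - μ) * (ν - μ ^ 2) = 0 := by linear_combination hν - ν * hμ + hμ3
  rcases mul_eq_zero.1 h with h | h
  exacts [.inl (sub_eq_zero.1 h), .inr (sub_eq_zero.1 h)]

theorem self_ne_sq_of_pow_three_eq_one {K : Type*} [Field K] {μ : K} (h3 : μ ^ 3 = 1)
    (h1 : μ ≠ 1) : μ ≠ μ ^ 2 := by
  intro h
  have : μ * (μ - 1) = 0 := by linear_combination -h
  rcases mul_eq_zero.1 this with h0 | h0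
  · simp [h0] at h3
  · exact h1 (sub_eq_zero.1 h0)

section Gamma3

variable {K G V W : Type*} [Field K] [Group G] [AddCommGroup V] [Module K V] [Module K[G] V]
  [IsScalarTower K K[G] V] [AddCommGroup W] [Module K W] [Module K[G] W]
  [IsScalarTower K K[G] W] {g ε z : G}

theorem pow_eq_one_of_hasEigenvalue {n : ℕ} (hε : ε ^ n = 1) {μ : K}
    (hμ : (groupEnd K V ε).HasEigenvalue μ) : μ ^ n = 1 := by
  obtain ⟨v, hv⟩ := hμ.exists_hasEigenvector
  have h := hv.pow_apply n
  rw [← map_pow, hε, map_one, End.one_apply] at h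
  exact smul_left_injective K hv.2 (h.symm.trans (one_smul K v).symm)

theorem of_smul_mem_eigenspace_sq (hεg : ε * g = g * ε ^ 2) {μ : K} {x : V}
    (hx : x ∈ (groupEnd K V ε).eigenspace μ) :
    of K G g • x ∈ (groupEnd K V ε).eigenspace (μ ^ 2) := by
  rw [End.mem_eigenspace_iff, groupEnd_apply] at hx ⊢
  rw [← mul_smul, ← map_mul, hεg, map_mul, map_pow, mul_smul, pow_two, mul_smul, hx,
    smul_comm (of K G ε) μ, hx, smul_smul, smul_comm (of K G g), pow_two]

theorem hasEigenvector_of_smul_sq (hεg : ε * g = g * ε ^ 2) {μ : K} {v : V}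
    (hv : (groupEnd K V ε).HasEigenvector μ v) :
    (groupEnd K V ε).HasEigenvector (μ ^ 2) (of K G g • v) :=
  ⟨of_smul_mem_eigenspace_sq hεg hv.1, of_smul_ne_zero g hv.2⟩

theorem finrank_eq_one_of_smul_eq_smul [IsAlgClosed K] [FiniteDimensional K V]
    [IsSimpleModule K[G] V] (hgen : Subgroup.closure {g, ε, z} = ⊤) {e d : K}
    (hε : ∀ x : V, of K G ε • x = e • x) (hz : ∀ x : V, of K G z • x = d • x) :
    finrank K V = 1 := by
  have : Nontrivial V := IsSimpleModule.nontrivial K[G] V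
  obtain ⟨μ, hμ⟩ := (groupEnd K V g).exists_eigenvalue
  obtain ⟨u, hu⟩ := hμ.exists_hasEigenvector
  have hline : ∀ s ∈ ({g, ε, z} : Set G), ∀ x ∈ K ∙ u, of K G s • x ∈ K ∙ u := by
    rintro _ (rfl | rfl | rfl) x hx
    · obtain ⟨k, rfl⟩ := Submodule.mem_span_singleton.1 hx
      rw [smul_comm, ← groupEnd_apply, hu.apply_eq_smul, smul_smul]
      exact Submodule.smul_mem _ _ (Submodule.mem_span_singleton_self u)
    · rw [hε]; exact Submodule.smul_mem _ _ hx
    · rw [hz]; exact Submodule.smul_mem _ _ hx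
  rcases eq_bot_or_eq_top_of_closure_eq_top hgen hline with h | h
  · exact absurd (Submodule.span_singleton_eq_bot.1 h) hu.2
  · rw [← finrank_top K V, ← h, finrank_span_singleton hu.2]

theorem not_hasEigenvalue_one [IsAlgClosed K] [IsSimpleModule K[G] V] (hV : finrank K V = 2)
    (hgen : Subgroup.closure {g, ε, z} = ⊤) (hεg : ε * g = g * ε ^ 2) {d : K}
    (hz : ∀ x : V, of K G z • x = d • x) : ¬ (groupEnd K V ε).HasEigenvalue 1 := by
  have : FiniteDimensional K V := .of_finrank_eq_succ hV
  have hF : ∀ s ∈ ({g, ε, z} : Set G), ∀ x ∈ (groupEnd K V ε).eigenspace 1,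
      of K G s • x ∈ (groupEnd K V ε).eigenspace 1 := by
    rintro _ (rfl | rfl | rfl) x hx
    · simpa only [one_pow] using of_smul_mem_eigenspace_sq hεg hx
    · rw [End.mem_eigenspace_iff, groupEnd_apply, one_smul] at hx ⊢
      rw [hx, hx]
    · rw [hz]; exact Submodule.smul_mem _ _ hx
  refine fun h1 => h1 ((eq_bot_or_eq_top_of_closure_eq_top hgen hF).resolve_right fun htop => ?_)
  have hε : ∀ x : V, of K G ε • x = (1 : K) • x := fun x =>
    End.mem_eigenspace_iff.1 (htop ▸ Submodule.mem_top)
  have := finrank_eq_one_of_smul_eq_smul hgen hε hz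
  omega

theorem hasEigenvalue_of_pow_three_eq_one [IsAlgClosed K] [IsSimpleModule K[G] V]
    (hV : finrank K V = 2) (hgen : Subgroup.closure {g, ε, z} = ⊤) (hεg : ε * g = g * ε ^ 2)
    (hε3 : ε ^ 3 = 1) {d : K} (hz : ∀ x : V, of K G z • x = d • x) {ν : K} (hν3 : ν ^ 3 = 1)
    (hν1 : ν ≠ 1) : (groupEnd K V ε).HasEigenvalue ν := by
  have : FiniteDimensional K V := .of_finrank_eq_succ hV
  have : Nontrivial V := IsSimpleModule.nontrivial K[G] V
  obtain ⟨μ, hμ⟩ := (groupEnd K V ε).exists_eigenvalue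
  have hμ1 : μ ≠ 1 := fun h => not_hasEigenvalue_one hV hgen hεg hz (h ▸ hμ)
  obtain ⟨v, hv⟩ := hμ.exists_hasEigenvector
  rcases eq_or_eq_sq_of_pow_three_eq_one (pow_eq_one_of_hasEigenvalue hε3 hμ) hμ1 hν3 hν1
    with rfl | rfl
  exacts [hμ, End.hasEigenvalue_of_hasEigenvector (hasEigenvector_of_smul_sq hεg hv)]

theorem linearIndependent_of_hasEigenvector (hεg : ε * g = g * ε ^ 2) {μ : K} (hμ : μ ≠ μ ^ 2)
    {v : V} (hv : (groupEnd K V ε).HasEigenvector μ v) :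
    LinearIndependent K ![v, of K G g • v] :=
  End.eigenvectors_linearIndependent' (groupEnd K V ε) ![μ, μ ^ 2]
    (injective_pair_iff_ne.2 hμ) _ (Fin.forall_fin_two.2 ⟨hv, hasEigenvector_of_smul_sq hεg hv⟩)

theorem nonempty_linearEquiv_of_hasEigenvector [IsSimpleModule K[G] V] [IsSimpleModule K[G] W]
    (hV : finrank K V = 2) (hgen : Subgroup.closure {g, ε, z} = ⊤) (hεg : ε * g = g * ε ^ 2)
    {c d μ : K} (hμ : μ ≠ μ ^ 2)
    (hVg : ∀ x : V, of K G (g ^ 2) • x = c • x) (hVz : ∀ x : V, of K G z • x = d • x)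
    (hWg : ∀ x : W, of K G (g ^ 2) • x = c • x) (hWz : ∀ x : W, of K G z • x = d • x)
    {v : V} {w : W} (hv : (groupEnd K V ε).HasEigenvector μ v)
    (hw : (groupEnd K W ε).HasEigenvector μ w) : Nonempty (V ≃ₗ[K[G]] W) := by
  let b := basisOfLinearIndependentOfCardEqFinrank
    (linearIndependent_of_hasEigenvector hεg hμ hv) (by simp [hV])
  have hb0 : b 0 = v := by simp [b, coe_basisOfLinearIndependentOfCardEqFinrank]
  have hb1 : b 1 = of K G g • v := by simp [b, coe_basisOfLinearIndependentOfCardEqFinrank]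
  let f : V →ₗ[K] W := b.constr K ![w, of K G g • w]
  have hfv : f v = w := by
    simpa only [hb0, Matrix.cons_val_zero] using b.constr_basis K ![w, of K G g • w] 0
  have hfgv : f (of K G g • v) = of K G g • w := by
    simpa only [hb1, Matrix.cons_val_one, Matrix.cons_val_fin_one]
      using b.constr_basis K ![w, of K G g • w] 1
  have hcomm (s : G) (h0 : f (of K G s • v) = of K G s • w)
      (h1 : f (of K G s • of K G g • v) = of K G s • of K G g • w) :
      ∀ x, f (of K G s • x) = of K G s • f x :=
    map_of_smul_of_basis b f s <| Fin.forall_fin_two.2 ⟨by rw [hb0, h0, hfv], by rw [hb1, h1, hfgv]⟩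
  have hf : ∀ s ∈ ({g, ε, z} : Set G), ∀ x, f (of K G s • x) = of K G s • f x := by
    simp only [Set.mem_insert_iff, Set.mem_singleton_iff, forall_eq_or_imp, forall_eq]
    refine ⟨?_, ?_, ?_⟩
    · refine hcomm g hfgv ?_
      rw [← mul_smul, ← mul_smul, ← map_mul, ← pow_two, hVg, hWg, map_smul, hfv]
    · have hεv : of K G ε • v = μ • v := hv.apply_eq_smul
      have hεw : of K G ε • w = μ • w := hw.apply_eq_smul
      have hεgv : of K G ε • of K G g • v = μ ^ 2 • of K G g • v :=
        (hasEigenvector_of_smul_sq hεg hv).apply_eq_smul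
      have hεgw : of K G ε • of K G g • w = μ ^ 2 • of K G g • w :=
        (hasEigenvector_of_smul_sq hεg hw).apply_eq_smul
      refine hcomm ε ?_ ?_
      · rw [hεv, hεw, map_smul, hfv]
      · rw [hεgv, hεgw, map_smul, hfgv]
    · exact fun x => by rw [hVz, hWz, map_smul]
  let F := equivariantOfLinearOfComm f fun σ x => map_of_smul_of_closure_eq_top hgen f hf σ x
  have hF : F ≠ 0 := fun h => hw.2 <| by
    rw [← hfv]
    exact LinearMap.congr_fun h v
  exact ⟨.ofBijective F (LinearMap.bijective_of_ne_zero hF)⟩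

end Gamma3

theorem simple_dim_two_iso_of_same_scalars_general
    {K : Type*} [Field K] [IsAlgClosed K] {G : Type*} [Group G]
    (g ε z : G)
    (hgen : Subgroup.closure {g, ε, z} = ⊤)
    (hrel1 : g * ε * g⁻¹ = ε ^ 2) (hrel2 : ε ^ 3 = 1)
    (V W : Type*) [AddCommGroup V] [Module K V]
    [Module (MonoidAlgebra K G) V] [IsScalarTower K (MonoidAlgebra K G) V]
    [AddCommGroup W] [Module K W]
    [Module (MonoidAlgebra K G) W] [IsScalarTower K (MonoidAlgebra K G) W]
    [IsSimpleModule (MonoidAlgebra K G) V] [IsSimpleModule (MonoidAlgebra K G) W]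
    (hV : Module.finrank K V = 2) (hW : Module.finrank K W = 2)
    (c d : K)
    (hVg : ∀ x : V, MonoidAlgebra.of K G (g ^ 2) • x = c • x)
    (hVz : ∀ x : V, MonoidAlgebra.of K G z • x = d • x)
    (hWg : ∀ x : W, MonoidAlgebra.of K G (g ^ 2) • x = c • x)
    (hWz : ∀ x : W, MonoidAlgebra.of K G z • x = d • x) :
    Nonempty (V ≃ₗ[MonoidAlgebra K G] W) := by
  have hεg := mul_eq_mul_sq_of_conj_eq_sq hrel1 hrel2
  have : FiniteDimensional K V := .of_finrank_eq_succ hV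
  have : Nontrivial V := IsSimpleModule.nontrivial (MonoidAlgebra K G) V
  obtain ⟨μ, hμ⟩ := (groupEnd K V ε).exists_eigenvalue
  have hμ1 : μ ≠ 1 := fun h => not_hasEigenvalue_one hV hgen hεg hVz (h ▸ hμ)
  have hμ3 := pow_eq_one_of_hasEigenvalue hrel2 hμ
  obtain ⟨v, hv⟩ := hμ.exists_hasEigenvector
  obtain ⟨w, hw⟩ :=
    (hasEigenvalue_of_pow_three_eq_one hW hgen hεg hrel2 hWz hμ3 hμ1).exists_hasEigenvector
  exact nonempty_linearEquiv_of_hasEigenvector hV hgen hεg (self_ne_sq_of_pow_three_eq_one hμ3 hμ1)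
    hVg hVz hWg hWz hv hw

/-- Let `K` be an algebraically closed field and `G` a non-abelian epimorphic image of the
group `Γ₃`, via `γ ↦ g`, `ν ↦ ε`, `ζ ↦ z`.  If `V` and `W` are 2-dimensional simple
`K G`-modules on which `g²` and `z` act by the same scalars `c` and `d` respectively,
then `V` and `W` are isomorphic as `K G`-modules. -/
theorem simple_dim_two_iso_of_same_scalars
    {K : Type*} [Field K] [IsAlgClosed K] {G : Type*} [Group G]
    (g ε z : G) (hε : ε ≠ 1)
    (hgen : Subgroup.closure {g, ε, z} = ⊤)
    (hrel1 : g * ε * g⁻¹ = ε ^ 2) (hrel2 : ε ^ 3 = 1)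
    (hrel3 : z * g = g * z) (hrel4 : z * ε = ε * z)
    (V W : Type*) [AddCommGroup V] [Module K V]
    [Module (MonoidAlgebra K G) V] [IsScalarTower K (MonoidAlgebra K G) V]
    [AddCommGroup W] [Module K W]
    [Module (MonoidAlgebra K G) W] [IsScalarTower K (MonoidAlgebra K G) W]
    [IsSimpleModule (MonoidAlgebra K G) V] [IsSimpleModule (MonoidAlgebra K G) W]
    (hV : Module.finrank K V = 2) (hW : Module.finrank K W = 2)
    (c d : K)
    (hVg : ∀ x : V, MonoidAlgebra.of K G (g ^ 2) • x = c • x)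
    (hVz : ∀ x : V, MonoidAlgebra.of K G z • x = d • x)
    (hWg : ∀ x : W, MonoidAlgebra.of K G (g ^ 2) • x = c • x)
    (hWz : ∀ x : W, MonoidAlgebra.of K G z • x = d • x) :
    Nonempty (V ≃ₗ[MonoidAlgebra K G] W) :=
  simple_dim_two_iso_of_same_scalars_general g ε z hgen hrel1 hrel2 V W hV hW c d hVg hVz hWg hWz
end

section
/- Assume ρ_z² σ_ε σ_{g²} = 1 and ρ_g = −1. In W ⊗ V set v₁′ = w₀⊗v₁ − ρ_z σ_ε² w₁⊗v₂, and in W ⊗ (W ⊗ V) set v₁″ = w₀⊗(ε·v₁′) − ρ_z σ_ε σ_z w₁⊗(ε²·v₁′). Then v₁″ ≠ 0, z·v₁″ = ρ_z σ_z² v₁″, and g·v₁″ lies in K·v₁″ if and only if σ_ε σ_z² = 1; in that case g·v₁″ = −ρ_z⁻² σ_z⁻¹ v₁″. (This is the criterion for (ad W)²(V) to be absolutely simple for the first pair.) -/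
/-!
Since `ε³ = 1` and `w₀` is an `ε`-eigenvector, `σε³ = 1`. Using this, `v₁″` expands as
`σε w₀⊗w₀⊗v₂ − ρz σε w₀⊗w₁⊗v₀ − ρz σz w₁⊗w₀⊗v₀ + ρz² σε σz w₁⊗w₁⊗v₁`, and `g` maps each of these
four (linearly independent) basis tensors to a multiple of another one. Hence `g·v₁″ ∈ K·v₁″` is a
proportionality of two coordinate vectors in `K⁴`; the two middle coordinates force
`σz² = σε²`, i.e. `σε σz² = σε³ = 1`, and conversely this makes the vectors proportional, with
factor `−ρz⁻² σz⁻¹` read off from the last coordinate. The element `z` acts on all of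
`W ⊗ (W ⊗ V)` by the scalar `ρz σz²`.
-/

open TensorProduct

namespace Representation

variable {K G V W : Type*} [Field K] [Group G] [AddCommGroup V] [Module K V]
  [AddCommGroup W] [Module K W]

theorem apply_eq_smul_one_of_basis {ι : Type*} (ρ : Representation K G V)
    (b : Module.Basis ι K V) {x : G} {c : K} (h : ∀ i, ρ x (b i) = c • b i) : ρ x = c • 1 :=
  b.ext fun i => by simp [h]

theorem tprod_apply_eq_smul_one {σ : Representation K G W} {ρ : Representation K G V} {x : G}
    {a b : K} (hσ : σ x = a • 1) (hρ : ρ x = b • 1) : σ.tprod ρ x = (a * b) • 1 := by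
  rw [tprod_apply, hσ, hρ, TensorProduct.map_smul_left, TensorProduct.map_smul_right, smul_smul]
  ext
  simp

theorem pow_eq_one_of_apply_eq_smul {ρ : Representation K G V} {x : G} {c : K} {v : V}
    (hv : v ≠ 0) (h : ρ x v = c • v) {n : ℕ} (hx : x ^ n = 1) : c ^ n = 1 := by
  have hpow : (ρ x ^ n) v = c ^ n • v :=
    Module.End.HasEigenvector.pow_apply ⟨by simpa using h, hv⟩ n
  rw [← map_pow, hx, map_one, Module.End.one_apply] at hpow
  exact smul_left_injective K hv (by simpa using hpow.symm)

end Representation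

theorem LinearIndependent.sum_smul_mem_span_singleton_iff {K M ι : Type*} [Field K]
    [AddCommGroup M] [Module K M] [Fintype ι] {e : ι → M} (he : LinearIndependent K e)
    (c c' : ι → K) : ∑ i, c' i • e i ∈ K ∙ ∑ i, c i • e i ↔ ∃ t : K, ∀ i, t * c i = c' i := by
  simp only [Submodule.mem_span_singleton, Finset.smul_sum, smul_smul]
  exact exists_congr fun t => ⟨Fintype.linearIndependent_iffₛ.mp he _ _, fun h => by simp [h]⟩

theorem linearIndependent_tmul_tmul {K U W V ι κ μ n : Type*} [Field K] [AddCommGroup U]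
    [Module K U] [AddCommGroup W] [Module K W] [AddCommGroup V] [Module K V]
    (u : Module.Basis ι K U) (w : Module.Basis κ K W) (v : Module.Basis μ K V)
    {f : n → ι × κ × μ} (hf : Function.Injective f) :
    LinearIndependent K fun i => u (f i).1 ⊗ₜ[K] (w (f i).2.1 ⊗ₜ[K] v (f i).2.2) := by
  simpa only [Function.comp_def, Module.Basis.tensorProduct_apply'] using
    (u.tensorProduct (w.tensorProduct v)).linearIndependent.comp f hf

section FirstPair

variable {K G V W : Type*} [Field K] [Group G] [AddCommGroup V] [Module K V]
  [AddCommGroup W] [Module K W]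

def firstPairIndices : Fin 4 → Fin 2 × Fin 2 × Fin 3 :=
  ![(0, 0, 2), (0, 1, 0), (1, 0, 0), (1, 1, 1)]

noncomputable def firstPairTensors (w : Module.Basis (Fin 2) K W)
    (v : Module.Basis (Fin 3) K V) : Fin 4 → W ⊗[K] (W ⊗[K] V) := fun i =>
  w (firstPairIndices i).1 ⊗ₜ (w (firstPairIndices i).2.1 ⊗ₜ v (firstPairIndices i).2.2)

theorem linearIndependent_firstPairTensors (w : Module.Basis (Fin 2) K W)
    (v : Module.Basis (Fin 3) K V) : LinearIndependent K (firstPairTensors w v) :=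
  linearIndependent_tmul_tmul w w v (by decide)

/-- Coordinates of `v₁″` along `firstPairTensors`, already simplified using `σε³ = 1`; those of
`g·v₁″` are `coordsGV1pp`. -/
def coordsV1pp (ρz σε σz : K) : Fin 4 → K :=
  ![σε, -(ρz * σε), -(ρz * σz), ρz ^ 2 * σε * σz]

def coordsGV1pp (ρz σε σz σg2 : K) : Fin 4 → K :=
  ![-(ρz ^ 2 * σε * σz * σg2 ^ 2), ρz * σz * σg2, ρz * σε * σg2, -σε]

theorem coordsGV1pp_eq_smul {ρz σε σz σg2 : K} (hσε3 : σε ^ 3 = 1) (hσz : σz ≠ 0)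
    (hcond : ρz ^ 2 * σε * σg2 = 1) (hs : σε * σz ^ 2 = 1) (i : Fin 4) :
    -(ρz⁻¹ ^ 2 * σz⁻¹) * coordsV1pp ρz σε σz i = coordsGV1pp ρz σε σz σg2 i := by
  have hρz : ρz ≠ 0 := by rintro rfl; simp at hcond
  have hσε : σε ≠ 0 := by rintro rfl; simp at hσε3
  have hσz2 : σz ^ 2 = σε ^ 2 := mul_left_cancel₀ hσε (by linear_combination hs - hσε3)
  fin_cases i <;>
    simp only [coordsV1pp, coordsGV1pp, Fin.zero_eta, Fin.mk_one, Fin.reduceFinMk,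
      Matrix.cons_val_zero, Matrix.cons_val_one, Matrix.cons_val, inv_pow, neg_mul, mul_neg,
      neg_neg, neg_inj] <;>
    field_simp
  · linear_combination -(ρz ^ 2 * σε * σg2 + 1) * hcond - ρz ^ 4 * σg2 ^ 2 * hσz2
  · linear_combination -σε * hcond - ρz ^ 2 * σg2 * hσz2
  · linear_combination -hcond

theorem eq_one_of_forall_mul_coordsV1pp_eq {ρz σε σz σg2 t : K} (hσε3 : σε ^ 3 = 1)
    (hcond : ρz ^ 2 * σε * σg2 = 1)
    (h : ∀ i, t * coordsV1pp ρz σε σz i = coordsGV1pp ρz σε σz σg2 i) : σε * σz ^ 2 = 1 := by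
  have hρz : ρz ≠ 0 := by rintro rfl; simp at hcond
  have hσg2 : σg2 ≠ 0 := by rintro rfl; simp at hcond
  have h1 := h 1
  have h2 := h 2
  simp only [coordsV1pp, coordsGV1pp, Matrix.cons_val_zero, Matrix.cons_val_one,
    Matrix.cons_val, mul_neg] at h1 h2
  have hσz2 : σz ^ 2 = σε ^ 2 := by
    apply mul_left_cancel₀ (mul_ne_zero hρz hσg2)
    linear_combination σε * h2 - σz * h1
  linear_combination σε * hσz2 + hσε3

theorem v1pp_eq_sum_coordsV1pp {ρ : Representation K G V} {σ : Representation K G W}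
    {v : Module.Basis (Fin 3) K V} {w : Module.Basis (Fin 2) K W} {ε : G} {ρz σε σz : K}
    (hσε3 : σε ^ 3 = 1)
    (hεv0 : ρ ε (v 0) = v 1) (hεv1 : ρ ε (v 1) = v 2) (hεv2 : ρ ε (v 2) = v 0)
    (hεw0 : σ ε (w 0) = σε • w 0) (hεw1 : σ ε (w 1) = σε ^ 2 • w 1)
    {v1' : W ⊗[K] V} (hv1' : v1' = w 0 ⊗ₜ[K] v 1 - (ρz * σε ^ 2) • (w 1 ⊗ₜ[K] v 2)) :
    w 0 ⊗ₜ[K] ((σ.tprod ρ) ε v1') - (ρz * σε * σz) • (w 1 ⊗ₜ[K] ((σ.tprod ρ) (ε ^ 2) v1')) =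
      ∑ i, coordsV1pp ρz σε σz i • firstPairTensors w v i := by
  subst hv1'
  simp only [firstPairTensors, firstPairIndices, coordsV1pp, Fin.sum_univ_four,
    Matrix.cons_val_zero, Matrix.cons_val_one, Matrix.cons_val, Representation.tprod_apply,
    map_tmul, map_sub, map_smul, pow_two, map_mul, Module.End.mul_apply, hεw0, hεw1, hεv0, hεv1,
    hεv2, tmul_sub, tmul_smul, ← smul_tmul', smul_smul, neg_smul]
  match_scalars
  · ring
  · linear_combination -ρz * σε * hσε3
  · linear_combination -ρz * σz * hσε3
  · linear_combination ρz ^ 2 * σε * σz * (σε ^ 3 + 1) * hσε3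

theorem tprod_tprod_apply_sum_coordsV1pp {ρ : Representation K G V}
    {σ : Representation K G W} {v : Module.Basis (Fin 3) K V} {w : Module.Basis (Fin 2) K W}
    {g : G} {ρg ρz σε σz σg2 : K}
    (hgv0 : ρ g (v 0) = ρg • v 0) (hgv1 : ρ g (v 1) = ρg • v 2) (hgv2 : ρ g (v 2) = ρg • v 1)
    (hgw0 : σ g (w 0) = w 1) (hgw1 : σ g (w 1) = σg2 • w 0) (hρg : ρg = -1) :
    σ.tprod (σ.tprod ρ) g (∑ i, coordsV1pp ρz σε σz i • firstPairTensors w v i) =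
      ∑ i, coordsGV1pp ρz σε σz σg2 i • firstPairTensors w v i := by
  simp only [firstPairTensors, firstPairIndices, coordsV1pp, coordsGV1pp, Fin.sum_univ_four,
    Matrix.cons_val_zero, Matrix.cons_val_one, Matrix.cons_val, Representation.tprod_apply,
    map_tmul, map_add, map_neg, map_smul, hgw0, hgw1, hgv0, hgv1, hgv2, hρg, one_smul,
    neg_smul, smul_neg, neg_neg, tmul_neg, tmul_smul, ← smul_tmul', smul_smul]
  match_scalars <;> ring

end FirstPair

theorem first_pair_adW_sq_V_simple_criterion_general
    {K : Type*} [Field K] {G : Type*} [Group G]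
    (g ε z : G)
    (hrel2 : ε ^ 3 = 1)
    {V : Type*} [AddCommGroup V] [Module K V]
    (ρ : Representation K G V) (v : Module.Basis (Fin 3) K V)
    (ρg ρz : K)
    (hεv0 : ρ ε (v 0) = v 1) (hεv1 : ρ ε (v 1) = v 2) (hεv2 : ρ ε (v 2) = v 0)
    (hzv : ∀ i, ρ z (v i) = ρz • v i)
    (hgv0 : ρ g (v 0) = ρg • v 0) (hgv1 : ρ g (v 1) = ρg • v 2)
    (hgv2 : ρ g (v 2) = ρg • v 1)
    {W : Type*} [AddCommGroup W] [Module K W]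
    (σ : Representation K G W) (w : Module.Basis (Fin 2) K W)
    (σε σz σg2 : K) (hσε : σε ≠ 0) (hσz : σz ≠ 0)
    (hεw0 : σ ε (w 0) = σε • w 0) (hεw1 : σ ε (w 1) = σε ^ 2 • w 1)
    (hzw0 : σ z (w 0) = σz • w 0) (hzw1 : σ z (w 1) = σz • w 1)
    (hgw0 : σ g (w 0) = w 1) (hgw1 : σ g (w 1) = σg2 • w 0)
    (hcond1 : ρz ^ 2 * σε * σg2 = 1) (hcond2 : ρg = -1) :
    ∀ (v1' : W ⊗[K] V) (v1'' : W ⊗[K] (W ⊗[K] V)),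
      v1' = w 0 ⊗ₜ[K] v 1 - (ρz * σε ^ 2) • (w 1 ⊗ₜ[K] v 2) →
      v1'' = w 0 ⊗ₜ[K] ((σ.tprod ρ) ε v1') -
        (ρz * σε * σz) • (w 1 ⊗ₜ[K] ((σ.tprod ρ) (ε ^ 2) v1')) →
      v1'' ≠ 0 ∧
      (σ.tprod (σ.tprod ρ)) z v1'' = (ρz * σz ^ 2) • v1'' ∧
      ((σ.tprod (σ.tprod ρ)) g v1'' ∈
          Submodule.span K ({v1''} : Set (W ⊗[K] (W ⊗[K] V))) ↔
        σε * σz ^ 2 = 1) ∧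
      (σε * σz ^ 2 = 1 →
        (σ.tprod (σ.tprod ρ)) g v1'' = (-(ρz⁻¹ ^ 2 * σz⁻¹)) • v1'') := by
  intro v1' v1'' hv1' hv1''
  have hσε3 : σε ^ 3 = 1 := σ.pow_eq_one_of_apply_eq_smul (w.ne_zero 0) hεw0 hrel2
  have he := linearIndependent_firstPairTensors w v
  have hv : v1'' = ∑ i, coordsV1pp ρz σε σz i • firstPairTensors w v i :=
    hv1''.trans (v1pp_eq_sum_coordsV1pp hσε3 hεv0 hεv1 hεv2 hεw0 hεw1 hv1')
  have hgv : σ.tprod (σ.tprod ρ) g v1'' =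
      ∑ i, coordsGV1pp ρz σε σz σg2 i • firstPairTensors w v i := by
    rw [hv, tprod_tprod_apply_sum_coordsV1pp hgv0 hgv1 hgv2 hgw0 hgw1 hcond2]
  have hzW : σ z = σz • 1 := σ.apply_eq_smul_one_of_basis w fun i => by fin_cases i <;> assumption
  have hz : σ.tprod (σ.tprod ρ) z = (ρz * σz ^ 2) • 1 := by
    rw [Representation.tprod_apply_eq_smul_one hzW
      (Representation.tprod_apply_eq_smul_one hzW (ρ.apply_eq_smul_one_of_basis v hzv))]
    ring_nf
  refine ⟨fun h0 => ?_, by rw [hz]; rfl, ?_, fun hs => ?_⟩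
  · rw [hv] at h0
    exact hσε (Fintype.linearIndependent_iff.mp he _ h0 0)
  · rw [hgv, hv, he.sum_smul_mem_span_singleton_iff]
    exact ⟨fun ⟨_, ht⟩ => eq_one_of_forall_mul_coordsV1pp_eq hσε3 hcond1 ht,
      fun hs => ⟨_, coordsGV1pp_eq_smul hσε3 hσz hcond1 hs⟩⟩
  · rw [hgv, hv, Finset.smul_sum]
    simp only [smul_smul, coordsGV1pp_eq_smul hσε3 hσz hcond1 hs]

/-- Criterion for `(ad W)²(V)` to be absolutely simple for the first pair over a
non-abelian epimorphic image of `Γ₃`. -/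
theorem first_pair_adW_sq_V_simple_criterion
    {K : Type*} [Field K] {G : Type*} [Group G]
    (g ε z : G) (hε : ε ≠ 1)
    (hgen : Subgroup.closure {g, ε, z} = ⊤)
    (hrel1 : g * ε * g⁻¹ = ε ^ 2) (hrel2 : ε ^ 3 = 1)
    (hrel3 : z * g = g * z) (hrel4 : z * ε = ε * z)
    {V : Type*} [AddCommGroup V] [Module K V]
    (ρ : Representation K G V) (v : Module.Basis (Fin 3) K V)
    (ρg ρz : K) (hρg : ρg ≠ 0) (hρz : ρz ≠ 0)
    (hεv0 : ρ ε (v 0) = v 1) (hεv1 : ρ ε (v 1) = v 2) (hεv2 : ρ ε (v 2) = v 0)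
    (hzv : ∀ i, ρ z (v i) = ρz • v i)
    (hgv0 : ρ g (v 0) = ρg • v 0) (hgv1 : ρ g (v 1) = ρg • v 2)
    (hgv2 : ρ g (v 2) = ρg • v 1)
    {W : Type*} [AddCommGroup W] [Module K W]
    (σ : Representation K G W) (w : Module.Basis (Fin 2) K W)
    (σε σz σg2 : K) (hσε : σε ≠ 0) (hσz : σz ≠ 0) (hσg2 : σg2 ≠ 0)
    (hεw0 : σ ε (w 0) = σε • w 0) (hεw1 : σ ε (w 1) = σε ^ 2 • w 1)
    (hzw0 : σ z (w 0) = σz • w 0) (hzw1 : σ z (w 1) = σz • w 1)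
    (hgw0 : σ g (w 0) = w 1) (hgw1 : σ g (w 1) = σg2 • w 0)
    (hcond1 : ρz ^ 2 * σε * σg2 = 1) (hcond2 : ρg = -1) :
    ∀ (v1' : W ⊗[K] V) (v1'' : W ⊗[K] (W ⊗[K] V)),
      v1' = w 0 ⊗ₜ[K] v 1 - (ρz * σε ^ 2) • (w 1 ⊗ₜ[K] v 2) →
      v1'' = w 0 ⊗ₜ[K] ((σ.tprod ρ) ε v1') -
        (ρz * σε * σz) • (w 1 ⊗ₜ[K] ((σ.tprod ρ) (ε ^ 2) v1')) →
      v1'' ≠ 0 ∧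
      (σ.tprod (σ.tprod ρ)) z v1'' = (ρz * σz ^ 2) • v1'' ∧
      ((σ.tprod (σ.tprod ρ)) g v1'' ∈
          Submodule.span K ({v1''} : Set (W ⊗[K] (W ⊗[K] V))) ↔
        σε * σz ^ 2 = 1) ∧
      (σε * σz ^ 2 = 1 →
        (σ.tprod (σ.tprod ρ)) g v1'' = (-(ρz⁻¹ ^ 2 * σz⁻¹)) • v1'') :=
  first_pair_adW_sq_V_simple_criterion_general g ε z hrel2 ρ v ρg ρz hεv0 hεv1 hεv2 hzv hgv0 hgv1
    hgv2 σ w σε σz σg2 hσε hσz hεw0 hεw1 hzw0 hzw1 hgw0 hgw1 hcond1 hcond2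
end

section
/- Assume char K = 2, ρ_g ρ_z σ_g = 1 and 1 + ρ_g + ρ_g² = 0. In V ⊗ V ⊗ W set w″ = v₂⊗v₀⊗w − ρ_g² ρ_z σ_g v₀⊗v₁⊗w + ρ_g(1 − ρ_z σ_g) v₁⊗v₂⊗w, then w‴ = v₂⊗w″ + ρ_g² ρ_z v₁⊗(g·w″) in V ⊗ (V ⊗ V ⊗ W), and finally w⁗ = v₀⊗w‴ + v₁⊗(ε·w‴) + v₂⊗(ε²·w‴) in V ⊗ (V ⊗ V ⊗ V ⊗ W). Then w⁗ ≠ 0, ε·w⁗ = w⁗, g·w⁗ = ρ_g σ_g w⁗ and z·w⁗ = ρ_z⁴ σ_z w⁗. -/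
/-!
From `1 + ρ_g + ρ_g² = 0` we get `ρ_g³ = 1`. The element `g²` acts on `V ⊗ V ⊗ W` by the scalar
`ρ_g⁴ σ_g²`, since `W` is a line and `g²` scales every `vᵢ` by `ρ_g²`. Hence `g` swaps the two
summands of `w‴ = v₂ ⊗ w″ + c • v₁ ⊗ g·w″`, and for `c = ρ_g² ρ_z` the relation `ρ_g ρ_z σ_g = 1`
makes `w‴` a `g`-eigenvector with eigenvalue `σ_g`. The vector `w⁗` is the sum of `w‴` over the
`ε`-orbit, with the cyclically permuted `vᵢ` as first factors; it is therefore `ε`-invariant, and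
since `g` normalises `⟨ε⟩` while fixing `v₀` and swapping `v₁, v₂` up to `ρ_g`, it is a
`g`-eigenvector with eigenvalue `ρ_g σ_g`. The element `z` acts on every factor by a scalar.
Finally `w⁗ ≠ 0` is read off basis coordinates: the `v₀`-coordinate of `w⁗` is `w‴`, whose
`v₂`-coordinate is `w″`, whose `v₂`-coordinate is `v₀ ⊗ w`.
-/

open TensorProduct

namespace Representation

section Tprod

variable {k G V U : Type*} [CommSemiring k] [Monoid G] [AddCommMonoid V] [Module k V]
  [AddCommMonoid U] [Module k U] {ρ : Representation k G V} {τ : Representation k G U}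

theorem tprod_apply_eq_smul_one_s14 {h : G} {a b : k} (hρ : ρ h = a • 1) (hτ : τ h = b • 1) :
    ρ.tprod τ h = (a * b) • 1 := by
  ext x u
  simp [hρ, hτ, smul_tmul', mul_smul, smul_comm a b]

theorem tprod_apply_add_smul_tmul_of_swap {g : G} {x y : V} {u : U} {a μ c s : k}
    (hx : ρ g x = a • y) (hy : ρ g y = a • x) (hu : τ (g ^ 2) u = μ • u)
    (hs : s = c * a * μ) (hc : s * c = a) :
    ρ.tprod τ g (x ⊗ₜ[k] u + c • (y ⊗ₜ[k] τ g u)) = s • (x ⊗ₜ[k] u + c • (y ⊗ₜ[k] τ g u)) := by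
  have hgg : τ g (τ g u) = μ • u := by rw [← Module.End.mul_apply, ← map_mul, ← sq, hu]
  simp only [map_add, map_smul, tprod_apply, map_tmul, hx, hy, hgg, smul_add, smul_tmul',
    tmul_smul, smul_smul]
  rw [hc, hs, mul_comm μ, add_comm]

end Tprod

section OrbitSum

variable {k G V U : Type*} [CommSemiring k] [Group G] [AddCommMonoid V] [Module k V]
  [AddCommMonoid U] [Module k U] {ρ : Representation k G V} (τ : Representation k G U)

noncomputable def orbitSum (v : Fin 3 → V) (ε : G) (u : U) : V ⊗[k] U :=
  v 0 ⊗ₜ[k] u + v 1 ⊗ₜ[k] τ ε u + v 2 ⊗ₜ[k] τ (ε ^ 2) u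

variable {τ} {v : Fin 3 → V} {ε : G}

theorem tprod_apply_orbitSum_of_cycle (hε : ε ^ 3 = 1) (h0 : ρ ε (v 0) = v 1)
    (h1 : ρ ε (v 1) = v 2) (h2 : ρ ε (v 2) = v 0) (u : U) :
    ρ.tprod τ ε (τ.orbitSum v ε u) = τ.orbitSum v ε u := by
  have hε2 : τ ε (τ ε u) = τ (ε ^ 2) u := by rw [← Module.End.mul_apply, ← map_mul, sq]
  have hε3 : τ ε (τ (ε ^ 2) u) = u := by
    rw [← Module.End.mul_apply, ← map_mul, ← pow_succ', hε, map_one, Module.End.one_apply]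
  simp only [orbitSum, map_add, tprod_apply, map_tmul, h0, h1, h2, hε2, hε3]
  abel

theorem tprod_apply_orbitSum_of_eigen {g : G} (hgε : g * ε * g⁻¹ = ε ^ 2) (hε : ε ^ 3 = 1)
    {a c : k} (h0 : ρ g (v 0) = a • v 0) (h1 : ρ g (v 1) = a • v 2) (h2 : ρ g (v 2) = a • v 1)
    {u : U} (hu : τ g u = c • u) :
    ρ.tprod τ g (τ.orbitSum v ε u) = (a * c) • τ.orbitSum v ε u := by
  have hg1 : g * ε = ε ^ 2 * g := by rw [← hgε]; group
  have hg2 : g * ε ^ 2 = ε * g :=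
    calc g * ε ^ 2 = ε ^ 3 * ε * g := by rw [sq, ← mul_assoc, hg1, mul_assoc, hg1]; group
      _ = ε * g := by rw [hε, one_mul]
  have hτ1 : τ g (τ ε u) = c • τ (ε ^ 2) u := by
    rw [← Module.End.mul_apply, ← map_mul, hg1, map_mul, Module.End.mul_apply, hu, map_smul]
  have hτ2 : τ g (τ (ε ^ 2) u) = c • τ ε u := by
    rw [← Module.End.mul_apply, ← map_mul, hg2, map_mul, Module.End.mul_apply, hu, map_smul]
  simp only [orbitSum, map_add, tprod_apply, map_tmul, h0, h1, h2, hu, hτ1, hτ2, smul_add,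
    smul_tmul', tmul_smul, smul_smul]
  rw [mul_comm c a]
  abel

theorem orbitSum_ne_zero (v : Module.Basis (Fin 3) k V) {u : U} (hu : u ≠ 0) :
    τ.orbitSum v ε u ≠ 0 := by
  intro h
  refine hu ?_
  simpa [orbitSum, equivFinsuppOfBasisLeft_apply_tmul_apply, Finsupp.single_apply] using
    congr(equivFinsuppOfBasisLeft v $h 0)

end OrbitSum

end Representation

open Representation

theorem LinearMap.eq_smul_one_of_span_singleton_eq_top {k W : Type*} [CommSemiring k]
    [AddCommMonoid W] [Module k W] {w : W} (hspan : Submodule.span k {w} = ⊤)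
    {f : Module.End k W} {c : k} (hf : f w = c • w) : f = c • 1 :=
  LinearMap.ext_on hspan (by simpa using hf)

theorem third_pair_adV_fourth_W_general
    {K : Type*} [Field K] {G : Type*} [Group G]
    (g ε z : G)
    (hrel1 : g * ε * g⁻¹ = ε ^ 2) (hrel2 : ε ^ 3 = 1)
    {V : Type*} [AddCommGroup V] [Module K V]
    (ρ : Representation K G V) (v : Module.Basis (Fin 3) K V)
    (ρg ρz : K)
    (hεv0 : ρ ε (v 0) = v 1) (hεv1 : ρ ε (v 1) = v 2) (hεv2 : ρ ε (v 2) = v 0)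
    (hzv : ∀ i, ρ z (v i) = ρz • v i)
    (hgv0 : ρ g (v 0) = ρg • v 0) (hgv1 : ρ g (v 1) = ρg • v 2)
    (hgv2 : ρ g (v 2) = ρg • v 1)
    {W : Type*} [AddCommGroup W] [Module K W]
    (σ : Representation K G W) (w : W) (hw : w ≠ 0)
    (hspan : Submodule.span K ({w} : Set W) = ⊤)
    (σg σz : K)
    (hgw : σ g w = σg • w) (hzw : σ z w = σz • w)
    (hcond1 : ρg * ρz * σg = 1) (hcond2 : 1 + ρg + ρg ^ 2 = 0) :
    ∀ (w'' : V ⊗[K] (V ⊗[K] W)) (w''' : V ⊗[K] (V ⊗[K] (V ⊗[K] W)))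
      (w'''' : V ⊗[K] (V ⊗[K] (V ⊗[K] (V ⊗[K] W)))),
      w'' = v 2 ⊗ₜ[K] (v 0 ⊗ₜ[K] w) -
          (ρg ^ 2 * ρz * σg) • (v 0 ⊗ₜ[K] (v 1 ⊗ₜ[K] w)) +
          (ρg * (1 - ρz * σg)) • (v 1 ⊗ₜ[K] (v 2 ⊗ₜ[K] w)) →
      w''' = v 2 ⊗ₜ[K] w'' +
          (ρg ^ 2 * ρz) • (v 1 ⊗ₜ[K] ((ρ.tprod (ρ.tprod σ)) g w'')) →
      w'''' = v 0 ⊗ₜ[K] w''' +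
          v 1 ⊗ₜ[K] ((ρ.tprod (ρ.tprod (ρ.tprod σ))) ε w''') +
          v 2 ⊗ₜ[K] ((ρ.tprod (ρ.tprod (ρ.tprod σ))) (ε ^ 2) w''') →
      w'''' ≠ 0 ∧
      (ρ.tprod (ρ.tprod (ρ.tprod (ρ.tprod σ)))) ε w'''' = w'''' ∧
      (ρ.tprod (ρ.tprod (ρ.tprod (ρ.tprod σ)))) g w'''' = (ρg * σg) • w'''' ∧
      (ρ.tprod (ρ.tprod (ρ.tprod (ρ.tprod σ)))) z w'''' = (ρz ^ 4 * σz) • w'''' := by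
  intro w'' w''' w'''' hw'' hw''' hw''''
  have hρg3 : ρg ^ 3 = 1 := by linear_combination (ρg - 1) * hcond2
  have hσg : σ g = σg • 1 := LinearMap.eq_smul_one_of_span_singleton_eq_top hspan hgw
  have hσz : σ z = σz • 1 := LinearMap.eq_smul_one_of_span_singleton_eq_top hspan hzw
  have hρz : ρ z = ρz • 1 := v.ext fun i => by simpa using hzv i
  have hρg2 : ρ (g ^ 2) = ρg ^ 2 • 1 :=
    v.ext fun i => by fin_cases i <;> simp [sq, hgv0, hgv1, hgv2, smul_smul]
  have hg2 : ρ.tprod (ρ.tprod σ) (g ^ 2) = (ρg ^ 2 * (ρg ^ 2 * σg ^ 2)) • 1 :=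
    tprod_apply_eq_smul_one_s14 hρg2
      (tprod_apply_eq_smul_one_s14 hρg2 (by rw [map_pow, hσg, smul_pow, one_pow]))
  have hg''' : ρ.tprod (ρ.tprod (ρ.tprod σ)) g w''' = σg • w''' := by
    rw [hw''']
    exact tprod_apply_add_smul_tmul_of_swap hgv2 hgv1 (by rw [hg2]; rfl)
      (by linear_combination -σg * hcond1 - ρg * ρz * σg ^ 2 * (ρg ^ 3 + 1) * hρg3)
      (by linear_combination ρg * hcond1)
  have hz : ρ.tprod (ρ.tprod (ρ.tprod (ρ.tprod σ))) z = (ρz ^ 4 * σz) • 1 := by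
    rw [tprod_apply_eq_smul_one_s14 hρz (tprod_apply_eq_smul_one_s14 hρz
      (tprod_apply_eq_smul_one_s14 hρz (tprod_apply_eq_smul_one_s14 hρz hσz)))]
    ring_nf
  have hw'''_ne : w''' ≠ 0 := fun h => hw <| by
    have := congr(equivFinsuppOfBasisLeft v
      (equivFinsuppOfBasisLeft v (equivFinsuppOfBasisLeft v $h 2) 2) 0)
    simpa [hw''', hw'', equivFinsuppOfBasisLeft_apply_tmul_apply, Finsupp.single_apply] using this
  subst hw''''
  exact ⟨orbitSum_ne_zero v hw'''_ne,
    tprod_apply_orbitSum_of_cycle hrel2 hεv0 hεv1 hεv2 _,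
    tprod_apply_orbitSum_of_eigen hrel1 hrel2 hgv0 hgv1 hgv2 hg''',
    by rw [hz]; rfl⟩

/-- For the third pair over a non-abelian epimorphic image of `Γ₃`, with `char K = 2`,
`ρ_g ρ_z σ_g = 1` and `1 + ρ_g + ρ_g² = 0`, the vector
`w⁗ = v₀⊗w‴ + v₁⊗(ε·w‴) + v₂⊗(ε²·w‴)` is non-zero, `ε·w⁗ = w⁗`,
`g·w⁗ = ρ_g σ_g w⁗` and `z·w⁗ = ρ_z⁴ σ_z w⁗`. -/
theorem third_pair_adV_fourth_W
    {K : Type*} [Field K] {G : Type*} [Group G]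
    (g ε z : G) (hε : ε ≠ 1)
    (hgen : Subgroup.closure {g, ε, z} = ⊤)
    (hrel1 : g * ε * g⁻¹ = ε ^ 2) (hrel2 : ε ^ 3 = 1)
    (hrel3 : z * g = g * z) (hrel4 : z * ε = ε * z)
    {V : Type*} [AddCommGroup V] [Module K V]
    (ρ : Representation K G V) (v : Module.Basis (Fin 3) K V)
    (ρg ρz : K) (hρg : ρg ≠ 0) (hρz : ρz ≠ 0)
    (hεv0 : ρ ε (v 0) = v 1) (hεv1 : ρ ε (v 1) = v 2) (hεv2 : ρ ε (v 2) = v 0)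
    (hzv : ∀ i, ρ z (v i) = ρz • v i)
    (hgv0 : ρ g (v 0) = ρg • v 0) (hgv1 : ρ g (v 1) = ρg • v 2)
    (hgv2 : ρ g (v 2) = ρg • v 1)
    {W : Type*} [AddCommGroup W] [Module K W]
    (σ : Representation K G W) (w : W) (hw : w ≠ 0)
    (hspan : Submodule.span K ({w} : Set W) = ⊤)
    (σg σz : K) (hσg : σg ≠ 0) (hσz : σz ≠ 0)
    (hgw : σ g w = σg • w) (hεw : σ ε w = w) (hzw : σ z w = σz • w)
    (hchar : ringChar K = 2)
    (hcond1 : ρg * ρz * σg = 1) (hcond2 : 1 + ρg + ρg ^ 2 = 0) :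
    ∀ (w'' : V ⊗[K] (V ⊗[K] W)) (w''' : V ⊗[K] (V ⊗[K] (V ⊗[K] W)))
      (w'''' : V ⊗[K] (V ⊗[K] (V ⊗[K] (V ⊗[K] W)))),
      w'' = v 2 ⊗ₜ[K] (v 0 ⊗ₜ[K] w) -
          (ρg ^ 2 * ρz * σg) • (v 0 ⊗ₜ[K] (v 1 ⊗ₜ[K] w)) +
          (ρg * (1 - ρz * σg)) • (v 1 ⊗ₜ[K] (v 2 ⊗ₜ[K] w)) →
      w''' = v 2 ⊗ₜ[K] w'' +
          (ρg ^ 2 * ρz) • (v 1 ⊗ₜ[K] ((ρ.tprod (ρ.tprod σ)) g w'')) →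
      w'''' = v 0 ⊗ₜ[K] w''' +
          v 1 ⊗ₜ[K] ((ρ.tprod (ρ.tprod (ρ.tprod σ))) ε w''') +
          v 2 ⊗ₜ[K] ((ρ.tprod (ρ.tprod (ρ.tprod σ))) (ε ^ 2) w''') →
      w'''' ≠ 0 ∧
      (ρ.tprod (ρ.tprod (ρ.tprod (ρ.tprod σ)))) ε w'''' = w'''' ∧
      (ρ.tprod (ρ.tprod (ρ.tprod (ρ.tprod σ)))) g w'''' = (ρg * σg) • w'''' ∧
      (ρ.tprod (ρ.tprod (ρ.tprod (ρ.tprod σ)))) z w'''' = (ρz ^ 4 * σz) • w'''' :=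
  third_pair_adV_fourth_W_general g ε z hrel1 hrel2 ρ v ρg ρz hεv0 hεv1 hεv2 hzv hgv0 hgv1 hgv2 σ w
    hw hspan σg σz hgw hzw hcond1 hcond2
end
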